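/- arXiv:1412.8741 — 3 statements merged into one kernel-verified Lean document; each statement's English description precedes it below -/
import Mathlib

section
/- In the above Markov chain on 2m letters, for each n ≥ 0 the conditional distribution of x_n given x_0 = y takes only the two values 𝔪·s_{n-1} (attained at x = y if n is even, at x = y^{-1} if n is odd) and 𝔪·s_n (attained at all other letters), where 𝔪 = 1/(2m-1) and s_n = ∑_{k=0}^{n-1}(-𝔪)^k. -/
/-!
Write `P = 𝔪 (J - Q)`, where `J` is the all-ones matrix and `Q` the permutation matrix of
`y ↦ y⁻¹`. Since `𝔪 (2m - 1) = 1`, one step of the recursion `Pⁿ⁺¹ = P Pⁿ` shows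
`Pⁿ = 𝔪 sₙ J + (-𝔪)ⁿ Qⁿ` for every `n`, and `Qⁿ` is the identity or `Q` according to the parity
of `n`. Finally `𝔪 sₙ + (-𝔪)ⁿ = 𝔪 sₙ₋₁` for `n ≥ 1`.
-/

/-- The inverse of a letter. -/
def letterInv {m : ℕ} (x : Fin m × Bool) : Fin m × Bool := (x.1, !x.2)

/-- Transition matrix of the Markov chain on the `2m` letters where from state `y`
the next state is uniform over the `2m - 1` letters different from `y⁻¹`. -/
noncomputable def letterTransition (m : ℕ) : Matrix (Fin m × Bool) (Fin m × Bool) ℝ :=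
  fun y x => if x = letterInv y then 0 else 1 / (2 * m - 1)

open Finset

section NonBacktracking

variable {α : Type*} [Fintype α] [DecidableEq α]

def nonBacktrackingMatrix (σ : Equiv.Perm α) (c : ℝ) : Matrix α α ℝ :=
  fun y x => if x = σ y then 0 else c

theorem sum_ite_eq_perm_apply (τ : Equiv.Perm α) (x : α) (a : ℝ) :
    ∑ z, (if x = τ z then a else 0) = a := by
  rw [Equiv.sum_comp τ (fun w => if x = w then a else 0), sum_ite_eq, if_pos (mem_univ x)]

theorem nonBacktrackingMatrix_mul_apply (σ : Equiv.Perm α) (c : ℝ) (A : Matrix α α ℝ)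
    (y x : α) :
    (nonBacktrackingMatrix σ c * A) y x = c * ∑ z, A z x - c * A (σ y) x := by
  have hrow : ∀ z, nonBacktrackingMatrix σ c y z = c - if z = σ y then c else 0 := by
    intro z
    unfold nonBacktrackingMatrix
    split_ifs <;> ring
  simp only [Matrix.mul_apply, hrow, sub_mul, sum_sub_distrib, mul_sum, ite_mul, zero_mul,
    sum_ite_eq', mem_univ, if_true]

theorem nonBacktrackingMatrix_pow_apply (σ : Equiv.Perm α) {c : ℝ}
    (hc : c * (Fintype.card α - 1) = 1) (n : ℕ) (y x : α) :
    (nonBacktrackingMatrix σ c ^ n) y x =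
      c * ∑ k ∈ range n, (-c) ^ k + if x = (σ ^ n) y then (-c) ^ n else 0 := by
  induction n generalizing y with
  | zero => simp [Matrix.one_apply, eq_comm]
  | succ n ih =>
    rw [pow_succ', nonBacktrackingMatrix_mul_apply]
    simp only [ih, sum_add_distrib, sum_const, card_univ, nsmul_eq_mul, sum_ite_eq_perm_apply,
      sum_range_succ, pow_succ, Equiv.Perm.mul_apply]
    split_ifs <;> linear_combination (c * ∑ k ∈ range n, (-c) ^ k) * hc

end NonBacktracking

theorem letterInv_involutive (m : ℕ) : Function.Involutive (letterInv (m := m)) := by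
  intro x
  simp [letterInv]

theorem letterTransition_eq_nonBacktrackingMatrix (m : ℕ) :
    letterTransition m =
      nonBacktrackingMatrix ((letterInv_involutive m).toPerm _) (1 / (2 * m - 1)) :=
  rfl

theorem letterInv_iterate {m : ℕ} (n : ℕ) (y : Fin m × Bool) :
    letterInv^[n] y = if Even n then y else letterInv y := by
  rcases Nat.even_or_odd n with hn | hn
  · simp [hn, (letterInv_involutive m).iterate_even hn]
  · simp [Nat.not_even_iff_odd.mpr hn, (letterInv_involutive m).iterate_odd hn]

theorem two_mul_natCast_sub_one_ne_zero (m : ℕ) : (2 * m - 1 : ℝ) ≠ 0 := by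
  intro h
  have h' : (2 * m : ℝ) = 1 := by linarith
  norm_cast at h'
  omega

theorem stmt_4_general (m : ℕ)
    (𝔪 : ℝ) (h𝔪 : 𝔪 = 1 / (2 * m - 1))
    (s : ℕ → ℝ) (hs : ∀ n, s n = ∑ k ∈ Finset.range n, (-𝔪) ^ k)
    (n : ℕ) (hn : 1 ≤ n) (x y : Fin m × Bool) :
    (letterTransition m ^ n) y x =
      if x = (if Even n then y else letterInv y) then 𝔪 * s (n - 1) else 𝔪 * s n := by
  have hc : 𝔪 * (Fintype.card (Fin m × Bool) - 1) = 1 := by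
    simp only [h𝔪, Fintype.card_prod, Fintype.card_fin, Fintype.card_bool, Nat.cast_mul,
      Nat.cast_ofNat]
    field_simp [two_mul_natCast_sub_one_ne_zero m]
  obtain ⟨k, rfl⟩ := Nat.exists_eq_add_of_le' hn
  rw [letterTransition_eq_nonBacktrackingMatrix, ← h𝔪, nonBacktrackingMatrix_pow_apply _ hc,
    Equiv.Perm.coe_pow, Function.Involutive.coe_toPerm, letterInv_iterate, hs, hs,
    Nat.add_sub_cancel, sum_range_succ]
  split_ifs <;> ring

theorem stmt_4 (m : ℕ) (hm : 2 ≤ m)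
    (𝔪 : ℝ) (h𝔪 : 𝔪 = 1 / (2 * m - 1))
    (s : ℕ → ℝ) (hs : ∀ n, s n = ∑ k ∈ Finset.range n, (-𝔪) ^ k)
    (n : ℕ) (hn : 1 ≤ n) (x y : Fin m × Bool) :
    (letterTransition m ^ n) y x =
      if x = (if Even n then y else letterInv y) then 𝔪 * s (n - 1) else 𝔪 * s n :=
  stmt_4_general m 𝔪 h𝔪 s hs n hn x y
end

section
/- Let μ be a probability measure on [n] and let x_1, …, x_{3z} be i.i.d. samples from μ. Let X = #{(i₁,i₂,i₃) : 0 < i₁ ≤ z < i₂ ≤ 2z < i₃ ≤ 3z, x_{i₁} = x_{i₂} = x_{i₃}}. Then E[X] = z³ ∑_{p=1}^n μ(p)³ and E[X²] ≤ z³ S + 3z⁴ S^{4/3} + 3z⁵ S^{5/3} + z⁶ S² where S = ∑_{p=1}^n μ(p)³. -/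
/-!
Identify the `3z` samples with three independent blocks of `z` samples. Then
`X = ∑ₚ N₀(p) N₁(p) N₂(p)`, where `Nₖ(p)` counts the occurrences of `p` in block `k`, and
independence of the blocks factors `E[X]` and `E[X²]` into one-block moments:
`E[N(p)] = z μ(p)` and `E[N(p) N(q)] = z [p = q] μ(p) + z (z - 1) μ(p) μ(q)`.
Expanding the resulting cube leaves `∑ μ(p)⁴` and `∑ μ(p)⁵`, which are at most `S^{4/3}` and
`S^{5/3}` because `μ(p) ≤ S^{1/3}`.
-/

open MeasureTheory ProbabilityTheory Finset

theorem measurePreserving_curry_pi {ι κ α : Type*} [Fintype ι] [Fintype κ] [MeasurableSpace α]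
    (μ : Measure α) [IsProbabilityMeasure μ] :
    MeasurePreserving (MeasurableEquiv.curry ι κ α) (Measure.pi fun _ : ι × κ => μ)
      (Measure.pi fun _ : ι => Measure.pi fun _ : κ => μ) where
  measurable := (MeasurableEquiv.curry ι κ α).measurable
  map_eq := by
    simpa only [Measure.infinitePi_eq_pi] using
      Measure.infinitePi_map_curry (X := α) (ι := ι) (κ := κ) fun _ _ => μ

def MeasurableEquiv.piBlocks {κ ι ι' : Type*} (α : Type*) [MeasurableSpace α] (e : κ × ι ≃ ι') :
    (ι' → α) ≃ᵐ (κ → ι → α) :=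
  (MeasurableEquiv.piCongrLeft (fun _ => α) e.symm).trans (MeasurableEquiv.curry κ ι α)

@[simp]
theorem MeasurableEquiv.piBlocks_apply {κ ι ι' : Type*} (α : Type*) [MeasurableSpace α]
    (e : κ × ι ≃ ι') (ω : ι' → α) (k : κ) (i : ι) :
    MeasurableEquiv.piBlocks α e ω k i = ω (e (k, i)) := by
  simp [MeasurableEquiv.piBlocks, MeasurableEquiv.piCongrLeft, Equiv.piCongrLeft_apply_eq_cast]

theorem measurePreserving_piBlocks {κ ι ι' α : Type*} [Fintype κ] [Fintype ι] [Fintype ι']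
    [MeasurableSpace α] (μ : Measure α) [IsProbabilityMeasure μ] (e : κ × ι ≃ ι') :
    MeasurePreserving (MeasurableEquiv.piBlocks α e) (Measure.pi fun _ : ι' => μ)
      (Measure.pi fun _ : κ => Measure.pi fun _ : ι => μ) :=
  (measurePreserving_curry_pi μ).comp (measurePreserving_piCongrLeft (fun _ : κ × ι => μ) e.symm)

def occurrences {ι α : Type*} [Fintype ι] [DecidableEq α] (v : ι → α) (p : α) : ℝ :=
  #{r | v r = p}

section Occurrences

variable {ι α : Type*} [MeasurableSpace α] [MeasurableSingletonClass α] (μ : Measure α)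

theorem integral_ite_eq_one_zero [DecidableEq α] (p : α) :
    ∫ x, (if x = p then (1 : ℝ) else 0) ∂μ = μ.real {p} := by
  simpa [Set.indicator, Pi.one_apply] using
    integral_indicator_one (μ := μ) (measurableSet_singleton p)

variable [Fintype ι] [Finite α] [IsProbabilityMeasure μ]

theorem integral_pi_comp_eval_mul_comp_eval {r s : ι} (hrs : r ≠ s) (f g : α → ℝ) :
    ∫ v, f (v r) * g (v s) ∂(Measure.pi fun _ : ι => μ) = (∫ x, f x ∂μ) * ∫ x, g x ∂μ := by
  have hind : IndepFun (fun v : ι → α => v r) (fun v => v s) (Measure.pi fun _ => μ) :=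
    (iIndepFun_pi (μ := fun _ : ι => μ) (X := fun _ => id) fun _ => aemeasurable_id).indepFun hrs
  rw [hind.integral_fun_comp_mul_comp (measurable_pi_apply r).aemeasurable
    (measurable_pi_apply s).aemeasurable Integrable.of_finite.1 Integrable.of_finite.1,
    integral_comp_eval (X := fun _ => α) Integrable.of_finite.1,
    integral_comp_eval (X := fun _ => α) Integrable.of_finite.1]

variable [DecidableEq α]

theorem integral_occurrences (p : α) :
    ∫ v, occurrences v p ∂(Measure.pi fun _ : ι => μ) = Fintype.card ι * μ.real {p} := by
  simp only [occurrences, natCast_card_filter]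
  rw [integral_finsetSum _ fun _ _ => Integrable.of_finite]
  simp [integral_comp_eval (X := fun _ => α) (f := fun x => if x = p then (1 : ℝ) else 0)
    Integrable.of_finite.1, integral_ite_eq_one_zero]

theorem integral_ite_eval_mul_ite_eval [DecidableEq ι] (r s : ι) (p q : α) :
    ∫ v, (if v r = p then (1 : ℝ) else 0) * (if v s = q then 1 else 0)
        ∂(Measure.pi fun _ : ι => μ) =
      if r = s then (if p = q then μ.real {p} else 0) else μ.real {p} * μ.real {q} := by
  by_cases hrs : r = s
  · subst hrs
    rw [integral_comp_eval (X := fun _ => α) (i := r)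
      (f := fun x => (if x = p then (1 : ℝ) else 0) * (if x = q then 1 else 0))
      Integrable.of_finite.1]
    have hdiag : ∀ x : α, (if x = p then (1 : ℝ) else 0) * (if x = q then 1 else 0) =
        if p = q then (if x = p then 1 else 0) else 0 := by
      intro x
      by_cases hx : x = p <;> by_cases hpq : p = q <;> simp [hx, hpq]
    simp_rw [hdiag]
    split_ifs <;> simp [integral_ite_eq_one_zero]
  · rw [integral_pi_comp_eval_mul_comp_eval μ hrs (fun x => if x = p then (1 : ℝ) else 0)
      (fun x => if x = q then (1 : ℝ) else 0), integral_ite_eq_one_zero,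
      integral_ite_eq_one_zero, if_neg hrs]

theorem integral_occurrences_mul_occurrences (p q : α) :
    ∫ v, occurrences v p * occurrences v q ∂(Measure.pi fun _ : ι => μ) =
      Fintype.card ι * (if p = q then μ.real {p} else 0)
        + Fintype.card ι * (Fintype.card ι - 1) * (μ.real {p} * μ.real {q}) := by
  classical
  simp only [occurrences, natCast_card_filter, sum_mul_sum]
  rw [integral_finsetSum _ fun _ _ => Integrable.of_finite]
  simp_rw [integral_finsetSum _ fun _ _ => Integrable.of_finite, integral_ite_eval_mul_ite_eval]
  have hsplit : ∀ r s : ι,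
      (if r = s then (if p = q then μ.real {p} else 0) else μ.real {p} * μ.real {q}) =
        (if r = s then (if p = q then μ.real {p} else 0) - μ.real {p} * μ.real {q} else 0)
          + μ.real {p} * μ.real {q} := by
    intro r s
    split_ifs <;> ring
  simp only [hsplit, sum_add_distrib, sum_ite_eq, mem_univ, if_true, sum_const, card_univ,
    nsmul_eq_mul]
  ring

end Occurrences

section BlockMoments

variable {κ ι α : Type*} [Fintype κ] [Fintype ι] [Fintype α] [DecidableEq α] [MeasurableSpace α]
  [MeasurableSingletonClass α] (μ : Measure α) [IsProbabilityMeasure μ]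

theorem integral_sum_prod_occurrences :
    ∫ V, ∑ p, ∏ k, occurrences (V k) p ∂(Measure.pi fun _ : κ => Measure.pi fun _ : ι => μ) =
      ∑ p, (Fintype.card ι * μ.real {p}) ^ Fintype.card κ := by
  rw [integral_finsetSum _ fun _ _ => Integrable.of_finite]
  refine sum_congr rfl fun p _ => ?_
  rw [integral_fintype_prod_eq_pow (fun v => occurrences v p), integral_occurrences]

theorem integral_sum_prod_occurrences_sq :
    ∫ V, (∑ p, ∏ k, occurrences (V k) p) ^ 2
        ∂(Measure.pi fun _ : κ => Measure.pi fun _ : ι => μ) =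
      ∑ p, ∑ q, (∫ v, occurrences v p * occurrences v q ∂(Measure.pi fun _ : ι => μ)) ^
        Fintype.card κ := by
  simp_rw [sq, sum_mul_sum, ← prod_mul_distrib]
  rw [integral_finsetSum _ fun _ _ => Integrable.of_finite]
  refine sum_congr rfl fun p _ => ?_
  rw [integral_finsetSum _ fun _ _ => Integrable.of_finite]
  exact sum_congr rfl fun q _ =>
    integral_fintype_prod_eq_pow (fun v => occurrences v p * occurrences v q)

end BlockMoments

theorem card_coincidences_eq_sum_prod_occurrences {ι α : Type*} [Fintype ι] [Fintype α]
    [DecidableEq α] (V : Fin 3 → ι → α) :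
    (#{r : ι × ι × ι | V 0 r.1 = V 1 r.2.1 ∧ V 1 r.2.1 = V 2 r.2.2} : ℝ) =
      ∑ p, ∏ k, occurrences (V k) p := by
  rw [card_eq_sum_card_fiberwise (f := fun r => V 0 r.1) (t := univ) fun _ _ => mem_univ _]
  push_cast
  refine sum_congr rfl fun p _ => ?_
  have hfiber : univ.filter (fun r : ι × ι × ι =>
        (V 0 r.1 = V 1 r.2.1 ∧ V 1 r.2.1 = V 2 r.2.2) ∧ V 0 r.1 = p) =
      univ.filter (V 0 · = p) ×ˢ (univ.filter (V 1 · = p) ×ˢ univ.filter (V 2 · = p)) := by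
    ext ⟨i, j, l⟩
    simp only [mem_filter, mem_univ, true_and, mem_product]
    constructor
    · rintro ⟨⟨h1, h2⟩, rfl⟩
      exact ⟨rfl, h1.symm, (h1.trans h2).symm⟩
    · rintro ⟨h0, h1, h2⟩
      exact ⟨⟨h0.trans h1.symm, h1.trans h2.symm⟩, h0⟩
  rw [filter_filter, hfiber, card_product, card_product, Fin.prod_univ_three]
  simp [occurrences, mul_assoc]

-- `finProdFinEquiv (k, r) = r + z * k`, so block `k` consists of the indices in `[k z, (k + 1) z)`.
theorem card_matchingTriples_eq_card_coincidences {α : Type*} [DecidableEq α] (z : ℕ)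
    (ω : Fin (3 * z) → α) :
    #{t : Fin (3 * z) × Fin (3 * z) × Fin (3 * z) |
        (t.1 : ℕ) < z ∧ z ≤ (t.2.1 : ℕ) ∧ (t.2.1 : ℕ) < 2 * z ∧ 2 * z ≤ (t.2.2 : ℕ) ∧
          ω t.1 = ω t.2.1 ∧ ω t.2.1 = ω t.2.2} =
      #{r : Fin z × Fin z × Fin z |
        ω (finProdFinEquiv (0, r.1)) = ω (finProdFinEquiv (1, r.2.1)) ∧
          ω (finProdFinEquiv (1, r.2.1)) = ω (finProdFinEquiv (2, r.2.2))} := by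
  symm
  refine card_bij (fun r _ => (finProdFinEquiv (0, r.1), finProdFinEquiv (1, r.2.1),
    finProdFinEquiv (2, r.2.2))) ?_ ?_ ?_
  · rintro ⟨i, j, l⟩ h
    simp only [mem_filter, mem_univ, true_and] at h ⊢
    refine ⟨?_, ?_, ?_, ?_, h⟩ <;> simp [finProdFinEquiv] <;> omega
  · rintro ⟨i, j, l⟩ _ ⟨i', j', l'⟩ _ h
    simp only [Prod.mk.injEq, EmbeddingLike.apply_eq_iff_eq] at h
    simp [h]
  · rintro ⟨a, b, c⟩ h
    simp only [mem_filter, mem_univ, true_and] at h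
    obtain ⟨ha, hb, hb', hc, hab, hbc⟩ := h
    have ea : a = finProdFinEquiv ((0 : Fin 3), (⟨a, ha⟩ : Fin z)) := by
      ext; simp [finProdFinEquiv]
    have eb : b = finProdFinEquiv ((1 : Fin 3), (⟨b - z, by omega⟩ : Fin z)) := by
      ext; simp [finProdFinEquiv]; omega
    have ec : c = finProdFinEquiv ((2 : Fin 3), (⟨c - 2 * z, by omega⟩ : Fin z)) := by
      ext; simp [finProdFinEquiv]; omega
    refine ⟨(⟨a, ha⟩, ⟨b - z, by omega⟩, ⟨c - 2 * z, by omega⟩), ?_, ?_⟩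
    · simp only [mem_filter, mem_univ, true_and, ← ea, ← eb, ← ec]
      exact ⟨hab, hbc⟩
    · simp only [← ea, ← eb, ← ec]

theorem sum_pow_le_rpow_sum_pow {α : Type*} {s : Finset α} {f : α → ℝ} (hf : ∀ i ∈ s, 0 ≤ f i)
    {m k : ℕ} (hm : m ≠ 0) (hmk : m ≤ k) :
    ∑ i ∈ s, f i ^ k ≤ (∑ i ∈ s, f i ^ m) ^ ((k : ℝ) / m) := by
  set S := ∑ i ∈ s, f i ^ m
  have hS : 0 ≤ S := sum_nonneg fun i hi => pow_nonneg (hf i hi) m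
  have hle : ∀ i ∈ s, f i ≤ S ^ (m⁻¹ : ℝ) := fun i hi => by
    calc f i = (f i ^ m) ^ (m⁻¹ : ℝ) := (Real.pow_rpow_inv_natCast (hf i hi) hm).symm
      _ ≤ S ^ (m⁻¹ : ℝ) := by
        gcongr
        exacts [pow_nonneg (hf i hi) m, single_le_sum (fun j hj => pow_nonneg (hf j hj) m) hi]
  calc ∑ i ∈ s, f i ^ k = ∑ i ∈ s, f i ^ m * f i ^ (k - m) := by
        refine sum_congr rfl fun i _ => ?_
        rw [← pow_add, Nat.add_sub_cancel' hmk]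
    _ ≤ ∑ i ∈ s, f i ^ m * (S ^ (m⁻¹ : ℝ)) ^ (k - m) := by
        gcongr with i hi
        exacts [pow_nonneg (hf i hi) m, hf i hi, hle i hi]
    _ = S ^ (1 + (m⁻¹ : ℝ) * (k - m : ℕ)) := by
        rw [← sum_mul, Real.rpow_one_add' hS (by positivity), Real.rpow_mul_natCast hS]
    _ = S ^ ((k : ℝ) / m) := by
        congr 1
        rw [Nat.cast_sub hmk]
        field_simp
        ring

theorem sum_sum_pow_three_eq {α : Type*} [Fintype α] [DecidableEq α] (w : α → ℝ) (a b : ℝ) :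
    ∑ p, ∑ q, (a * (if p = q then w p else 0) + b * (w p * w q)) ^ 3 =
      a ^ 3 * ∑ p, w p ^ 3 + 3 * a ^ 2 * b * ∑ p, w p ^ 4 + 3 * a * b ^ 2 * ∑ p, w p ^ 5
        + b ^ 3 * (∑ p, w p ^ 3) ^ 2 := by
  have hterm : ∀ p q, (a * (if p = q then w p else 0) + b * (w p * w q)) ^ 3 =
      (if p = q then a ^ 3 * w p ^ 3 + 3 * a ^ 2 * b * w p ^ 4 + 3 * a * b ^ 2 * w p ^ 5 else 0)
        + b ^ 3 * w p ^ 3 * w q ^ 3 := by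
    intro p q
    split_ifs with h
    · subst h; ring
    · ring
  simp only [hterm, sum_add_distrib, sum_ite_eq, mem_univ, if_true, ← mul_sum, ← sum_mul]
  ring

theorem sum_sum_pow_three_le {α : Type*} [Fintype α] [DecidableEq α] {w : α → ℝ}
    (hw : ∀ p, 0 ≤ w p) (z : ℕ) :
    ∑ p, ∑ q, ((z : ℝ) * (if p = q then w p else 0) + z * (z - 1) * (w p * w q)) ^ 3 ≤
      (z : ℝ) ^ 3 * ∑ p, w p ^ 3 + 3 * (z : ℝ) ^ 4 * (∑ p, w p ^ 3) ^ ((4 : ℝ) / 3)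
        + 3 * (z : ℝ) ^ 5 * (∑ p, w p ^ 3) ^ ((5 : ℝ) / 3) + (z : ℝ) ^ 6 * (∑ p, w p ^ 3) ^ 2 := by
  have hb0 : 0 ≤ (z : ℝ) * (z - 1) := by
    rcases z with _ | z
    · simp
    · simp only [Nat.cast_succ, add_sub_cancel_right]
      positivity
  have hbz : (z : ℝ) * (z - 1) ≤ (z : ℝ) ^ 2 := by nlinarith [(z.cast_nonneg : (0 : ℝ) ≤ z)]
  have h4 : ∑ p, w p ^ 4 ≤ (∑ p, w p ^ 3) ^ ((4 : ℝ) / 3) := by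
    exact_mod_cast sum_pow_le_rpow_sum_pow (fun p _ => hw p) (m := 3) (k := 4) three_ne_zero
      (by norm_num)
  have h5 : ∑ p, w p ^ 5 ≤ (∑ p, w p ^ 3) ^ ((5 : ℝ) / 3) := by
    exact_mod_cast sum_pow_le_rpow_sum_pow (fun p _ => hw p) (m := 3) (k := 5) three_ne_zero
      (by norm_num)
  rw [sum_sum_pow_three_eq]
  have c4 : 3 * (z : ℝ) ^ 2 * (z * (z - 1)) * ∑ p, w p ^ 4 ≤
      3 * (z : ℝ) ^ 4 * (∑ p, w p ^ 3) ^ ((4 : ℝ) / 3) :=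
    calc _ ≤ 3 * (z : ℝ) ^ 2 * (z : ℝ) ^ 2 * (∑ p, w p ^ 3) ^ ((4 : ℝ) / 3) := by gcongr
      _ = _ := by ring
  have hsum5 : 0 ≤ ∑ p, w p ^ 5 := sum_nonneg fun p _ => pow_nonneg (hw p) 5
  have c5 : 3 * (z : ℝ) * (z * (z - 1)) ^ 2 * ∑ p, w p ^ 5 ≤
      3 * (z : ℝ) ^ 5 * (∑ p, w p ^ 3) ^ ((5 : ℝ) / 3) :=
    calc _ ≤ 3 * (z : ℝ) * ((z : ℝ) ^ 2) ^ 2 * (∑ p, w p ^ 3) ^ ((5 : ℝ) / 3) := by gcongr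
      _ = _ := by ring
  have c6 : ((z : ℝ) * (z - 1)) ^ 3 * (∑ p, w p ^ 3) ^ 2 ≤ (z : ℝ) ^ 6 * (∑ p, w p ^ 3) ^ 2 :=
    calc _ ≤ ((z : ℝ) ^ 2) ^ 3 * (∑ p, w p ^ 3) ^ 2 := by gcongr
      _ = _ := by ring
  linarith

theorem stmt_7_general (n z : ℕ)
    (μ : Measure (Fin n)) [IsProbabilityMeasure μ]
    (P : Measure (Fin (3 * z) → Fin n)) (hP : P = Measure.pi fun _ => μ)
    (S : ℝ) (hS : S = ∑ p : Fin n, (μ {p}).toReal ^ 3)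
    (X : (Fin (3 * z) → Fin n) → ℝ)
    (hX : ∀ ω, X ω =
      (Finset.univ.filter
        (fun t : Fin (3 * z) × Fin (3 * z) × Fin (3 * z) =>
          (t.1 : ℕ) < z ∧ z ≤ (t.2.1 : ℕ) ∧ (t.2.1 : ℕ) < 2 * z ∧ 2 * z ≤ (t.2.2 : ℕ) ∧
            ω t.1 = ω t.2.1 ∧ ω t.2.1 = ω t.2.2)).card) :
    (∫ ω, X ω ∂P) = (z : ℝ) ^ 3 * S ∧
      (∫ ω, X ω ^ 2 ∂P) ≤
        (z : ℝ) ^ 3 * S + 3 * (z : ℝ) ^ 4 * S ^ ((4 : ℝ) / 3)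
          + 3 * (z : ℝ) ^ 5 * S ^ ((5 : ℝ) / 3) + (z : ℝ) ^ 6 * S ^ 2 := by
  subst hP
  set blocks := MeasurableEquiv.piBlocks (Fin n) (finProdFinEquiv : Fin 3 × Fin z ≃ Fin (3 * z))
  have hblocks : MeasurePreserving blocks _ _ := measurePreserving_piBlocks μ _
  have hX_blocks : X = fun ω => ∑ p, ∏ k, occurrences (blocks ω k) p := by
    funext ω
    rw [hX, card_matchingTriples_eq_card_coincidences,
      ← card_coincidences_eq_sum_prod_occurrences]
    simp [blocks]
  have hS_real : S = ∑ p, μ.real {p} ^ 3 := hS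
  constructor
  · rw [hX_blocks, hblocks.integral_comp' (g := fun V => ∑ p, ∏ k, occurrences (V k) p),
      integral_sum_prod_occurrences]
    simp [mul_pow, mul_sum, hS_real]
  · rw [hX_blocks, hblocks.integral_comp' (g := fun V => (∑ p, ∏ k, occurrences (V k) p) ^ 2),
      integral_sum_prod_occurrences_sq]
    simp only [integral_occurrences_mul_occurrences, Fintype.card_fin]
    rw [hS_real]
    exact sum_sum_pow_three_le (fun p => measureReal_nonneg) z

theorem stmt_7 (n z : ℕ) (hn : 1 ≤ n) (hz : 1 ≤ z)
    (μ : Measure (Fin n)) [IsProbabilityMeasure μ]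
    (P : Measure (Fin (3 * z) → Fin n)) (hP : P = Measure.pi fun _ => μ)
    (S : ℝ) (hS : S = ∑ p : Fin n, (μ {p}).toReal ^ 3)
    (X : (Fin (3 * z) → Fin n) → ℝ)
    (hX : ∀ ω, X ω =
      (Finset.univ.filter
        (fun t : Fin (3 * z) × Fin (3 * z) × Fin (3 * z) =>
          (t.1 : ℕ) < z ∧ z ≤ (t.2.1 : ℕ) ∧ (t.2.1 : ℕ) < 2 * z ∧ 2 * z ≤ (t.2.2 : ℕ) ∧
            ω t.1 = ω t.2.1 ∧ ω t.2.1 = ω t.2.2)).card) :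
    (∫ ω, X ω ∂P) = (z : ℝ) ^ 3 * S ∧
      (∫ ω, X ω ^ 2 ∂P) ≤
        (z : ℝ) ^ 3 * S + 3 * (z : ℝ) ^ 4 * S ^ ((4 : ℝ) / 3)
          + 3 * (z : ℝ) ^ 5 * S ^ ((5 : ℝ) / 3) + (z : ℝ) ^ 6 * S ^ 2 :=
  stmt_7_general n z μ P hP S hS X hX
end

section
/- Let μ be a probability measure on [n], q ≥ 1 an integer, and z ≥ 2n^{1-1/q}. If x_1,…,x_{qz} are chosen independently according to μ, then the probability that there exist indices i₁,…,i_q with (j-1)z < i_j ≤ jz for each j and x_{i₁} = x_{i₂} = ⋯ = x_{i_q} is at least 1 - (1 - 2^{-q})^{z/(4 n^{1-1/q})}. -/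
open MeasureTheory Set

variable {X : Type*} [MeasurableSpace X]

lemma map_pi_comp {ι ι' : Type*} [Fintype ι] [Fintype ι']
    (ρ : Measure X) [IsProbabilityMeasure ρ] (f : ι' → ι) (hf : Function.Injective f) :
    Measure.map (fun ω : ι → X => ω ∘ f) (Measure.pi fun _ => ρ) = Measure.pi (fun _ : ι' => ρ) := by
  classical
  symm
  refine Measure.pi_eq fun s hs => ?_
  have hmeas : Measurable (fun ω : ι → X => ω ∘ f) :=
    measurable_pi_lambda _ fun i' => measurable_pi_apply (f i')
  rw [Measure.map_apply hmeas (MeasurableSet.univ_pi hs)]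
  have hpre : (fun ω : ι → X => ω ∘ f) ⁻¹' (univ.pi s)
      = univ.pi (fun i => ⋂ (i' : ι') (_ : f i' = i), s i') := by
    ext ω
    simp only [mem_preimage, mem_pi, mem_univ, forall_true_left, mem_iInter, Function.comp]
    constructor
    · rintro h i i' rfl; exact h i'
    · intro h i'; exact h (f i') i' rfl
  rw [hpre, Measure.pi_pi]
  have key : ∀ i' : ι', (⋂ (i'' : ι') (_ : f i'' = f i'), s i'') = s i' := by
    intro i'
    apply Subset.antisymm
    · intro x hx
      exact mem_iInter₂.1 hx i' rfl
    · intro x hx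
      simp only [mem_iInter]
      rintro i'' h
      rwa [hf h]
  calc ∏ i : ι, ρ (⋂ (i' : ι') (_ : f i' = i), s i')
      = ∏ i ∈ Finset.univ.image f, ρ (⋂ (i' : ι') (_ : f i' = i), s i') := by
        refine (Finset.prod_subset (Finset.subset_univ _) fun i _ hi => ?_).symm
        have : (⋂ (i' : ι') (_ : f i' = i), s i') = univ := by
          refine iInter_eq_univ.2 fun i' => ?_
          refine iInter_eq_univ.2 fun h => ?_
          exact absurd (Finset.mem_image.2 ⟨i', Finset.mem_univ _, h⟩) hi
        rw [this]; exact measure_univ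
    _ = ∏ i' : ι', ρ (⋂ (i'' : ι') (_ : f i'' = f i'), s i'') := by
        rw [Finset.prod_image]
        intro a _ b _ h; exact hf h
    _ = ∏ i' : ι', ρ (s i') := by
        exact Finset.prod_congr rfl fun i' _ => by rw [key i']

lemma map_pi_uncurry {α β : Type*} [Fintype α] [Fintype β]
    (ρ : Measure X) [IsProbabilityMeasure ρ] :
    Measure.map (fun (f : α → β → X) (p : α × β) => f p.1 p.2)
      (Measure.pi fun _ : α => Measure.pi fun _ : β => ρ) = Measure.pi (fun _ : α × β => ρ) := by
  symm
  refine Measure.pi_eq fun s hs => ?_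
  have hmeas : Measurable (fun (f : α → β → X) (p : α × β) => f p.1 p.2) :=
    measurable_pi_lambda _ fun p => (measurable_pi_apply p.2).comp (measurable_pi_apply p.1)
  rw [Measure.map_apply hmeas (MeasurableSet.univ_pi hs)]
  have hpre : (fun (f : α → β → X) (p : α × β) => f p.1 p.2) ⁻¹' (univ.pi s)
      = univ.pi (fun a => univ.pi (fun b => s (a, b))) := by
    ext f
    simp only [mem_preimage, mem_pi, mem_univ, forall_true_left]
    exact ⟨fun h a b => h (a, b), fun h p => h p.1 p.2⟩
  rw [hpre, Measure.pi_pi]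
  simp_rw [Measure.pi_pi]
  rw [Fintype.prod_prod_type]

lemma map_pi_curry {α β : Type*} [Fintype α] [Fintype β]
    (ρ : Measure X) [IsProbabilityMeasure ρ] :
    Measure.map (fun (σ : α × β → X) (a : α) (b : β) => σ (a, b))
      (Measure.pi (fun _ : α × β => ρ)) = Measure.pi fun _ : α => Measure.pi fun _ : β => ρ := by
  rw [← map_pi_uncurry ρ, Measure.map_map]
  · have : ((fun (σ : α × β → X) (a : α) (b : β) => σ (a, b)) ∘
        (fun (f : α → β → X) (p : α × β) => f p.1 p.2)) = id := rfl
    rw [this, Measure.map_id]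
  · exact measurable_pi_lambda _ fun a => measurable_pi_lambda _ fun b =>
      measurable_pi_apply (a, b)
  · exact measurable_pi_lambda _ fun p => (measurable_pi_apply p.2).comp (measurable_pi_apply p.1)

lemma real_pow_ineq1 (p : ℝ) (s : ℕ) (h0 : 0 ≤ p) (h1 : p ≤ 1) :
    (1 - p) ^ s * (1 + s * p) ≤ 1 := by
  have hb : (1 + s * p) ≤ (1 + p) ^ s := by
    have := one_add_mul_le_pow (a := p) (by linarith) s
    linarith
  have h2 : (1 - p) ^ s * (1 + s * p) ≤ (1 - p) ^ s * (1 + p) ^ s :=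
    mul_le_mul_of_nonneg_left hb (pow_nonneg (by linarith) s)
  have h3 : (1 - p) ^ s * (1 + p) ^ s = (1 - p ^ 2) ^ s := by
    rw [← mul_pow]; ring_nf
  have h4 : (1 - p ^ 2) ^ s ≤ 1 := by
    apply pow_le_one₀ <;> nlinarith
  linarith

lemma real_hit_lb (p : ℝ) (s : ℕ) (h0 : 0 ≤ p) (h1 : p ≤ 1) (hsp : (s : ℝ) * p ≤ 1) :
    (s : ℝ) * p / 2 ≤ 1 - (1 - p) ^ s := by
  have h2 : (1 - p) ^ s * (1 + s * p) ≤ 1 := real_pow_ineq1 p s h0 h1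
  have h3 : (0:ℝ) ≤ (s:ℝ) * p := mul_nonneg (Nat.cast_nonneg s) h0
  have h5 : (0:ℝ) ≤ (1 - p) ^ s := pow_nonneg (by linarith) s
  nlinarith

lemma real_hit_half (p : ℝ) (s : ℕ) (hs : 1 ≤ s) (h1 : p ≤ 1) (hp : 1 / (s:ℝ) ≤ p) :
    (1 - p) ^ s ≤ 1 / 2 := by
  have hs0 : (0:ℝ) < s := by exact_mod_cast hs
  have h0 : (0:ℝ) ≤ 1 - p := by linarith
  have step : (1 - p) ^ s ≤ (1 - 1/(s:ℝ)) ^ s :=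
    pow_le_pow_left₀ h0 (by linarith) s
  have key : (1 - 1/(s:ℝ)) ^ s * (1 + s * (1/(s:ℝ))) ≤ 1 :=
    real_pow_ineq1 _ s (by positivity) (by rw [div_le_one hs0]; exact_mod_cast hs)
  have hss : (s:ℝ) * (1/(s:ℝ)) = 1 := by field_simp
  rw [hss] at key
  linarith

lemma toReal_meas_eq_sum {α : Type*} [Fintype α] [MeasurableSpace α]
    [MeasurableSingletonClass α] (ρ : Measure α) [IsProbabilityMeasure ρ] (S : Set α)
    [DecidablePred (· ∈ S)] :
    (ρ S).toReal = ∑ x ∈ Finset.univ.filter (· ∈ S), (ρ {x}).toReal := by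
  have h1 : S = ⋃ x ∈ Finset.univ.filter (· ∈ S), {x} := by
    ext y; simp
  have h2 : ρ S = ∑ x ∈ Finset.univ.filter (· ∈ S), ρ {x} := by
    conv_lhs => rw [h1]
    rw [measure_biUnion_finset]
    · intro a _ b _ hab
      simp [Function.onFun, hab]
    · intro b _; exact measurableSet_singleton b
  rw [h2, ENNReal.toReal_sum]
  intro a _; exact measure_ne_top ρ _

lemma toReal_compl {α : Type*} [MeasurableSpace α] (ρ : Measure α) [IsProbabilityMeasure ρ]
    {A : Set α} (hA : MeasurableSet A) : (ρ Aᶜ).toReal = 1 - (ρ A).toReal := by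
  rw [prob_compl_eq_one_sub hA, ENNReal.toReal_sub_of_le prob_le_one ENNReal.one_ne_top,
    ENNReal.toReal_one]

lemma pi_const_box {m : ℕ} {X : Type*} [MeasurableSpace X] (ρ : Measure X)
    [IsProbabilityMeasure ρ] (A : Set X) :
    ((Measure.pi fun _ : Fin m => ρ) (univ.pi fun _ => A)).toReal = (ρ A).toReal ^ m := by
  rw [Measure.pi_pi, Finset.prod_const, Finset.card_univ, Fintype.card_fin, ENNReal.toReal_pow]

lemma final_arith (EN PS c : ℝ) (hc : 2 ≤ c) (hPS0 : 0 ≤ PS) (hEN_lb : 1/(c-1) ≤ EN)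
    (hfinal : EN^2 ≤ PS * (EN + EN^2)) : c⁻¹ ≤ PS := by
  have hcpos : (0:ℝ) < c - 1 := by linarith
  have key1 : 1 ≤ EN * (c - 1) := by
    rw [div_le_iff₀ hcpos] at hEN_lb
    linarith
  have hENpos : 0 < EN := by nlinarith
  have key2 : EN ≤ PS * (1 + EN) := by
    have h1 : EN * EN ≤ (PS * (1 + EN)) * EN := by nlinarith
    exact le_of_mul_le_mul_right h1 hENpos
  have step1 : 1 + EN ≤ c * EN := by nlinarith
  have step2 : EN ≤ PS * (c * EN) := le_trans key2 (mul_le_mul_of_nonneg_left step1 hPS0)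
  have step3 : 1 * EN ≤ (PS * c) * EN := by rw [one_mul, mul_assoc]; exact step2
  have h1c : 1 ≤ PS * c := le_of_mul_le_mul_right step3 hENpos
  rw [inv_eq_one_div, div_le_iff₀ (by linarith : (0:ℝ) < c)]
  linarith

lemma core (n q s : ℕ) (hq : 1 ≤ q) (hs : 1 ≤ s)
    (μ : Measure (Fin n)) [IsProbabilityMeasure μ]
    (hnum : (1:ℝ)/((2:ℝ)^q - 1) ≤ ((s:ℝ)/2)^q / (n:ℝ)^(q-1)) :
    ((2:ℝ)^q)⁻¹ ≤ ((Measure.pi fun _ : Fin q => Measure.pi fun _ : Fin s => μ)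
      {g : Fin q → Fin s → Fin n | ∃ x : Fin n, ∀ j, ∃ r, g j r = x}).toReal := by
  classical
  set ν : Measure (Fin s → Fin n) := Measure.pi fun _ => μ with hν
  set κ : Measure (Fin q → Fin s → Fin n) := Measure.pi fun _ => ν with hκ
  set S : Set (Fin q → Fin s → Fin n) := {g | ∃ x : Fin n, ∀ j, ∃ r, g j r = x} with hS
  set p : Fin n → ℝ := fun x => (μ {x}).toReal with hpdef
  set Hit : Fin n → Set (Fin s → Fin n) := fun x => {b | ∃ r, b r = x} with hHitdef
  set A : Fin n → Set (Fin q → Fin s → Fin n) := fun x => {g | ∀ j, ∃ r, g j r = x} with hAdef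
  have hp0 : ∀ x, 0 ≤ p x := fun x => ENNReal.toReal_nonneg
  have hp1 : ∀ x, p x ≤ 1 := fun x => by
    have := ENNReal.toReal_mono ENNReal.one_ne_top (prob_le_one (μ := μ) (s := {x}))
    simpa using this
  -- value of miss/hit probabilities
  have hmiss : ∀ x, (ν ((Hit x)ᶜ)).toReal = (1 - p x) ^ s := by
    intro x
    have hc : (Hit x)ᶜ = univ.pi fun _ : Fin s => ({x}ᶜ : Set (Fin n)) := by
      ext b; simp [hHitdef, Set.mem_pi]
    rw [hc, hν, pi_const_box]
    congr 1
    rw [toReal_compl μ (measurableSet_singleton x)]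
  have hHitval : ∀ x, (ν (Hit x)).toReal = 1 - (1 - p x) ^ s := by
    intro x
    have h1 := toReal_compl ν (A := Hit x) MeasurableSet.of_discrete
    rw [hmiss] at h1
    linarith
  set h : Fin n → ℝ := fun x => (ν (Hit x)).toReal with hhdef
  have hh0 : ∀ x, 0 ≤ h x := fun x => ENNReal.toReal_nonneg
  have hHitval' : ∀ x, h x = 1 - (1 - p x) ^ s := hHitval
  have hAbox : ∀ x, A x = univ.pi fun _ : Fin q => Hit x := by
    intro x; ext g; simp [hAdef, hHitdef, Set.mem_pi]
  have hAval : ∀ x, (κ (A x)).toReal = h x ^ q := by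
    intro x; rw [hAbox, hκ, pi_const_box]
  have hABval : ∀ x y, (κ (A x ∩ A y)).toReal = ((ν (Hit x ∩ Hit y)).toReal) ^ q := by
    intro x y
    have hb : A x ∩ A y = univ.pi fun _ : Fin q => (Hit x ∩ Hit y) := by
      ext g
      simp only [hAdef, Set.mem_inter_iff, Set.mem_setOf_eq, Set.mem_pi, Set.mem_univ,
        forall_true_left, hHitdef, ← forall_and]
    rw [hb, hκ, pi_const_box]
  have hhit2 : ∀ x y, x ≠ y → (ν (Hit x ∩ Hit y)).toReal ≤ h x * h y := by
    intro x y hxy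
    have hxyc : (Hit x)ᶜ ∩ (Hit y)ᶜ = univ.pi fun _ : Fin s => (({x} ∪ {y})ᶜ : Set (Fin n)) := by
      ext b
      simp only [hHitdef, Set.mem_inter_iff, Set.mem_compl_iff, Set.mem_setOf_eq, not_exists,
        Set.mem_pi, Set.mem_univ, forall_true_left, Set.mem_union, Set.mem_singleton_iff, not_or,
        ← forall_and]
    have hpair : (μ ({x} ∪ {y})).toReal = p x + p y := by
      rw [measure_union (Set.disjoint_singleton.mpr hxy) (measurableSet_singleton y),
        ENNReal.toReal_add (measure_ne_top _ _) (measure_ne_top _ _)]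
    have hpairle : p x + p y ≤ 1 := by
      rw [← hpair]
      have := ENNReal.toReal_mono ENNReal.one_ne_top (prob_le_one (μ := μ) (s := {x} ∪ {y}))
      simpa using this
    have hmiss2 : (ν ((Hit x)ᶜ ∩ (Hit y)ᶜ)).toReal = (1 - p x - p y) ^ s := by
      rw [hxyc, hν, pi_const_box]
      congr 1
      rw [toReal_compl μ (by measurability), hpair]
      ring
    have hie : (ν ((Hit x)ᶜ ∪ (Hit y)ᶜ)).toReal + (ν ((Hit x)ᶜ ∩ (Hit y)ᶜ)).toReal
        = (ν ((Hit x)ᶜ)).toReal + (ν ((Hit y)ᶜ)).toReal := by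
      have e1 := measure_union_add_inter (μ := ν) ((Hit x)ᶜ) (t := (Hit y)ᶜ)
        MeasurableSet.of_discrete
      have e2 := congrArg ENNReal.toReal e1
      rwa [ENNReal.toReal_add (measure_ne_top _ _) (measure_ne_top _ _),
        ENNReal.toReal_add (measure_ne_top _ _) (measure_ne_top _ _)] at e2
    have hint : (ν (Hit x ∩ Hit y)).toReal = 1 - (ν ((Hit x)ᶜ ∪ (Hit y)ᶜ)).toReal := by
      have : (Hit x)ᶜ ∪ (Hit y)ᶜ = (Hit x ∩ Hit y)ᶜ := (Set.compl_inter _ _).symm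
      rw [this, toReal_compl ν MeasurableSet.of_discrete]
      ring
    have hab : (1 - p x - p y) ^ s ≤ (1 - p x) ^ s * (1 - p y) ^ s := by
      rw [← mul_pow]
      apply pow_le_pow_left₀ (by linarith) (by nlinarith [mul_nonneg (hp0 x) (hp0 y)])
    have hx1 : h x = 1 - (1 - p x) ^ s := hHitval x
    have hy1 : h y = 1 - (1 - p y) ^ s := hHitval y
    rw [hint, hx1, hy1]
    rw [hmiss2] at hie
    rw [hmiss x, hmiss y] at hie
    nlinarith [hie, hab]
  have hpsum : ∑ x, p x = 1 := by
    have h0 := toReal_meas_eq_sum μ (univ : Set (Fin n))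
    simp only [measure_univ, ENNReal.toReal_one, Set.mem_univ, Finset.filter_true] at h0
    exact h0.symm
  set w : (Fin q → Fin s → Fin n) → ℝ := fun g => (κ {g}).toReal with hwdef
  have hw0 : ∀ g, 0 ≤ w g := fun g => ENNReal.toReal_nonneg
  have hval : ∀ (E : Set (Fin q → Fin s → Fin n)),
      (κ E).toReal = ∑ g ∈ Finset.univ.filter (· ∈ E), w g := fun E => toReal_meas_eq_sum κ E
  set N : (Fin q → Fin s → Fin n) → ℝ := fun g => ∑ x, (if g ∈ A x then (1:ℝ) else 0) with hNdef
  have hE1 : ∑ g, w g * N g = ∑ x, h x ^ q := by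
    have e1 : ∀ g, w g * N g = ∑ x, (if g ∈ A x then w g else 0) := by
      intro g
      simp only [hNdef]
      rw [Finset.mul_sum]
      exact Finset.sum_congr rfl fun x _ => by rw [mul_ite, mul_one, mul_zero]
    calc ∑ g, w g * N g = ∑ g, ∑ x, (if g ∈ A x then w g else 0) :=
          Finset.sum_congr rfl fun g _ => e1 g
      _ = ∑ x, ∑ g, (if g ∈ A x then w g else 0) := Finset.sum_comm
      _ = ∑ x, (κ (A x)).toReal := by
          refine Finset.sum_congr rfl fun x _ => ?_
          rw [hval (A x), Finset.sum_filter]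
          exact Finset.sum_congr rfl fun a _ => by split_ifs <;> rfl
      _ = ∑ x, h x ^ q := Finset.sum_congr rfl fun x _ => hAval x
  have hE2 : ∑ g, w g * N g ^ 2 ≤ (∑ x, h x ^ q) + (∑ x, h x ^ q) ^ 2 := by
    have e1 : ∀ g, w g * N g ^ 2 = ∑ x, ∑ y, (if g ∈ A x ∩ A y then w g else 0) := by
      intro g
      simp only [hNdef]
      rw [sq, Finset.sum_mul_sum, Finset.mul_sum]
      refine Finset.sum_congr rfl fun x _ => ?_
      rw [Finset.mul_sum]
      refine Finset.sum_congr rfl fun y _ => ?_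
      by_cases hx : g ∈ A x <;> by_cases hy : g ∈ A y <;>
        simp [hx, hy, Set.mem_inter_iff]
    have e2 : ∑ g, w g * N g ^ 2 = ∑ x, ∑ y, (κ (A x ∩ A y)).toReal := by
      rw [Finset.sum_congr rfl fun g _ => e1 g, Finset.sum_comm]
      refine Finset.sum_congr rfl fun x _ => ?_
      rw [Finset.sum_comm]
      refine Finset.sum_congr rfl fun y _ => ?_
      rw [hval (A x ∩ A y), Finset.sum_filter]
      exact Finset.sum_congr rfl fun a _ => by split_ifs <;> rfl
    rw [e2]
    have e3 : ∀ x y : Fin n,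
        (κ (A x ∩ A y)).toReal ≤ (if x = y then h x ^ q else 0) + h x ^ q * h y ^ q := by
      intro x y
      by_cases hxy : x = y
      · subst hxy
        rw [Set.inter_self, hAval, if_pos rfl]
        nlinarith [pow_nonneg (hh0 x) q]
      · rw [if_neg hxy, hABval, zero_add, ← mul_pow]
        exact pow_le_pow_left₀ ENNReal.toReal_nonneg (hhit2 x y hxy) q
    calc ∑ x, ∑ y, (κ (A x ∩ A y)).toReal
        ≤ ∑ x, ∑ y, ((if x = y then h x ^ q else 0) + h x ^ q * h y ^ q) :=
          Finset.sum_le_sum fun x _ => Finset.sum_le_sum fun y _ => e3 x y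
      _ = (∑ x, h x ^ q) + (∑ x, h x ^ q) ^ 2 := by
          simp only [Finset.sum_add_distrib]
          congr 1
          · refine Finset.sum_congr rfl fun x _ => ?_
            simp [Finset.sum_ite_eq]
          · rw [sq, Finset.sum_mul_sum]
  have hPS0 : (0:ℝ) ≤ (κ S).toReal := ENNReal.toReal_nonneg
  have hc2 : (2:ℝ) ≤ 2 ^ q := by
    calc (2:ℝ) = 2 ^ 1 := (pow_one 2).symm
      _ ≤ 2 ^ q := pow_le_pow_right₀ one_le_two hq
  by_cases hcase : ∃ x, 1/(s:ℝ) ≤ p x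
  · obtain ⟨x, hx⟩ := hcase
    have hsubA : A x ⊆ S := fun g hg => ⟨x, hg⟩
    have hmono : (κ (A x)).toReal ≤ (κ S).toReal :=
      ENNReal.toReal_mono (measure_ne_top _ _) (measure_mono hsubA)
    rw [hAval] at hmono
    have hhx : 1/2 ≤ h x := by
      rw [hHitval' x]
      have := real_hit_half (p x) s hs (hp1 x) hx
      linarith
    calc ((2:ℝ)^q)⁻¹ = (1/2:ℝ)^q := by rw [one_div, inv_pow]
      _ ≤ h x ^ q := pow_le_pow_left₀ (by norm_num) hhx q
      _ ≤ (κ S).toReal := hmono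
  · push_neg at hcase
    have hs0 : (0:ℝ) < s := by exact_mod_cast hs
    have hEN_lb : (1:ℝ)/((2:ℝ)^q - 1) ≤ ∑ x, h x ^ q := by
      have hterm : ∀ x, ((s:ℝ)/2 * p x) ^ q ≤ h x ^ q := by
        intro x
        apply pow_le_pow_left₀ (by positivity)
        rw [hHitval' x]
        have hsp : (s:ℝ) * p x ≤ 1 := by
          calc (s:ℝ) * p x ≤ s * (1/s) :=
                mul_le_mul_of_nonneg_left (hcase x).le (by positivity)
            _ = 1 := by field_simp
        have hlb := real_hit_lb (p x) s (hp0 x) (hp1 x) hsp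
        linarith
      have hsum1 : ∑ x, ((s:ℝ)/2 * p x) ^ q = ((s:ℝ)/2)^q * ∑ x, p x ^ q := by
        rw [Finset.mul_sum]
        exact Finset.sum_congr rfl fun x _ => mul_pow _ _ _
      have hpq : (1:ℝ)/(n:ℝ)^(q-1) ≤ ∑ x, p x ^ q := by
        have hjen := pow_sum_div_card_le_sum_pow (s := Finset.univ) (f := p)
          (fun i _ => hp0 i) (q-1)
        have hq1 : q - 1 + 1 = q := by omega
        rw [hpsum, one_pow, Finset.card_univ, Fintype.card_fin, hq1] at hjen
        exact hjen
      calc (1:ℝ)/((2:ℝ)^q - 1) ≤ ((s:ℝ)/2)^q / (n:ℝ)^(q-1) := hnum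
        _ = ((s:ℝ)/2)^q * (1/(n:ℝ)^(q-1)) := by ring
        _ ≤ ((s:ℝ)/2)^q * ∑ x, p x ^ q :=
            mul_le_mul_of_nonneg_left hpq (by positivity)
        _ = ∑ x, ((s:ℝ)/2 * p x) ^ q := hsum1.symm
        _ ≤ ∑ x, h x ^ q := Finset.sum_le_sum fun x _ => hterm x
    have hNzero : ∀ g, g ∉ S → N g = 0 := by
      intro g hg
      simp only [hNdef]
      refine Finset.sum_eq_zero fun x _ => ?_
      rw [if_neg]
      exact fun hgA => hg ⟨x, hgA⟩
    set F := Finset.univ.filter (· ∈ S) with hFdef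
    have hFs : ∀ (f : _ → ℝ), (∀ g, g ∉ S → f g = 0) → ∑ g ∈ F, f g = ∑ g, f g := by
      intro f hf
      refine Finset.sum_subset (Finset.subset_univ F) fun g _ hgF => ?_
      refine hf g fun hgS => hgF ?_
      simp [hFdef, hgS]
    have hCS := Finset.sum_mul_sq_le_sq_mul_sq F (fun g => Real.sqrt (w g))
        (fun g => Real.sqrt (w g) * N g)
    have hterm1 : ∀ g, Real.sqrt (w g) * (Real.sqrt (w g) * N g) = w g * N g := by
      intro g; rw [← mul_assoc, Real.mul_self_sqrt (hw0 g)]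
    have hterm2 : ∀ g : Fin q → Fin s → Fin n, Real.sqrt (w g) ^ 2 = w g :=
      fun g => Real.sq_sqrt (hw0 g)
    have hterm3 : ∀ g, (Real.sqrt (w g) * N g) ^ 2 = w g * N g ^ 2 := by
      intro g; rw [mul_pow, Real.sq_sqrt (hw0 g)]
    simp only [hterm1, hterm2, hterm3] at hCS
    rw [hFs (fun g => w g * N g) (fun g hg => by show w g * N g = 0; rw [hNzero g hg, mul_zero]),
        hFs (fun g => w g * N g ^ 2)
          (fun g hg => by show w g * N g ^ 2 = 0; rw [hNzero g hg]; ring)] at hCS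
    rw [hE1] at hCS
    have hPSF : (κ S).toReal = ∑ g ∈ F, w g := by
      rw [hFdef, hval S]
      exact Finset.sum_congr (Finset.filter_congr_decidable _ _ _) fun _ _ => rfl
    rw [← hPSF] at hCS
    have hfinal : (∑ x, h x ^ q) ^ 2 ≤ (κ S).toReal * ((∑ x, h x ^ q) + (∑ x, h x ^ q) ^ 2) :=
      le_trans hCS (mul_le_mul_of_nonneg_left hE2 hPS0)
    exact final_arith _ _ _ hc2 hPS0 hEN_lb hfinal

set_option maxHeartbeats 1000000

theorem stmt_8 (n q z : ℕ) (hn : 1 ≤ n) (hq : 1 ≤ q)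
    (hz : (2 : ℝ) * (n : ℝ) ^ (1 - 1 / (q : ℝ)) ≤ z)
    (μ : Measure (Fin n)) [IsProbabilityMeasure μ]
    (P : Measure (Fin (q * z) → Fin n)) (hP : P = Measure.pi fun _ => μ) :
    1 - (1 - (2 : ℝ) ^ (-(q : ℝ))) ^ ((z : ℝ) / (4 * (n : ℝ) ^ (1 - 1 / (q : ℝ)))) ≤
      (P {ω | ∃ i : Fin q → Fin (q * z),
          (∀ j : Fin q, (j : ℕ) * z ≤ (i j : ℕ) ∧ (i j : ℕ) < ((j : ℕ) + 1) * z) ∧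
          ∀ j j' : Fin q, ω (i j) = ω (i j')}).toReal := by
  classical
  subst hP
  have hqR : (1:ℝ) ≤ (q:ℝ) := by exact_mod_cast hq
  have hexp0 : (0:ℝ) ≤ 1 - 1/(q:ℝ) := by
    have : (1:ℝ)/(q:ℝ) ≤ 1 := by
      rw [div_le_one (by linarith)]; exact hqR
    linarith
  have hm1 : (1:ℝ) ≤ (n:ℝ)^(1 - 1/(q:ℝ)) := by
    calc (1:ℝ) = (1:ℝ)^(1 - 1/(q:ℝ)) := (Real.one_rpow _).symm
      _ ≤ (n:ℝ)^(1 - 1/(q:ℝ)) :=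
        Real.rpow_le_rpow (by norm_num) (by exact_mod_cast hn) hexp0
  have hz2 : 2 ≤ z := by
    have h1 : (2:ℝ) ≤ (z:ℝ) := le_trans (by nlinarith) hz
    exact_mod_cast h1
  have hz0 : 0 < z := by omega
  have hrpow_le_one : (2:ℝ)^(-(q:ℝ)) ≤ 1 :=
    Real.rpow_le_one_of_one_le_of_nonpos one_le_two (by linarith)
  have hbase_nonneg : (0:ℝ) ≤ 1 - (2:ℝ)^(-(q:ℝ)) := by linarith
  have hLHS_le_one : ∀ c : ℝ,
      1 - (1 - (2:ℝ)^(-(q:ℝ))) ^ ((z:ℝ)/(4*(n:ℝ)^(1 - 1/(q:ℝ)))) ≤ 1 := by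
    intro _
    have := Real.rpow_nonneg hbase_nonneg ((z:ℝ)/(4*(n:ℝ)^(1 - 1/(q:ℝ))))
    linarith
  by_cases htriv : n = 1 ∨ q = 1
  · have huniv : {ω : Fin (q*z) → Fin n | ∃ i : Fin q → Fin (q * z),
        (∀ j : Fin q, (j : ℕ) * z ≤ (i j : ℕ) ∧ (i j : ℕ) < ((j : ℕ) + 1) * z) ∧
        ∀ j j' : Fin q, ω (i j) = ω (i j')} = Set.univ := by
      ext ω
      simp only [Set.mem_setOf_eq, Set.mem_univ, iff_true]
      rcases htriv with h1 | h1
      · subst h1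
        refine ⟨fun j => ⟨(j:ℕ)*z, ?_⟩, fun j => ⟨le_refl _, ?_⟩,
          fun j j' => Subsingleton.elim _ _⟩
        · exact (Nat.mul_lt_mul_right hz0).mpr j.2
        · have : ((j:ℕ)+1)*z = (j:ℕ)*z + z := by ring
          simp only [this]
          omega
      · subst h1
        refine ⟨fun _ => ⟨0, by omega⟩, fun j => ?_, fun j j' => by
          have : j = j' := Subsingleton.elim _ _
          rw [this]⟩
        have hj0 : (j:ℕ) = 0 := by omega
        simp [hj0]
        omega
    rw [huniv, measure_univ]
    simpa using hLHS_le_one 0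
  · push_neg at htriv
    have hn2 : 2 ≤ n := by omega
    have hq2 : 2 ≤ q := by omega
    set m : ℝ := (n:ℝ)^(1 - 1/(q:ℝ)) with hmdef
    have hmpos : 0 < m := by
      rw [hmdef]; positivity
    have hm43 : (4:ℝ)/3 ≤ m := by
      have e1 : (4:ℝ)/3 ≤ Real.sqrt 2 := by
        rw [Real.le_sqrt (by norm_num) (by norm_num)]
        norm_num
      have e2 : Real.sqrt 2 = (2:ℝ)^((1:ℝ)/2) := Real.sqrt_eq_rpow 2
      have e3 : (2:ℝ)^((1:ℝ)/2) ≤ (2:ℝ)^(1 - 1/(q:ℝ)) := by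
        apply Real.rpow_le_rpow_of_exponent_le one_le_two
        have hqc : (2:ℝ) ≤ (q:ℝ) := by exact_mod_cast hq2
        have : (1:ℝ)/(q:ℝ) ≤ 1/2 := by
          rw [div_le_div_iff₀ (by linarith) (by norm_num)]
          linarith
        linarith
      have e4 : (2:ℝ)^(1 - 1/(q:ℝ)) ≤ (n:ℝ)^(1 - 1/(q:ℝ)) :=
        Real.rpow_le_rpow (by norm_num) (by exact_mod_cast hn2) hexp0
      rw [hmdef]
      linarith [e1, e3, e4, e2.symm.le, e2.le]
    set k : ℕ := ⌈(z:ℝ)/(4*m)⌉₊ with hkdef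
    have hkpos : 0 < k := by
      rw [hkdef]
      apply Nat.ceil_pos.mpr
      positivity
    have hkR : (0:ℝ) < (k:ℝ) := by exact_mod_cast hkpos
    have hzk2m : 2*m ≤ (z:ℝ)/(k:ℝ) := by
      by_cases hk1 : k = 1
      · rw [hk1]; simpa using hz
      · have hk2 : 2 ≤ k := by omega
        have h4m : 4*m ≤ (z:ℝ) := by
          by_contra hlt
          push_neg at hlt
          have h1 : (z:ℝ)/(4*m) ≤ 1 := by
            rw [div_le_one (by positivity)]
            linarith
          have h2 : k ≤ 1 := by
            rw [hkdef]
            exact_mod_cast Nat.ceil_le.mpr (by simpa using h1)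
          omega
        have hkub : (k:ℝ) ≤ (z:ℝ)/(4*m) + 1 := by
          rw [hkdef]
          exact (Nat.ceil_lt_add_one (by positivity)).le
        rw [le_div_iff₀ hkR]
        have h5 : 2*m*(k:ℝ) ≤ 2*m*((z:ℝ)/(4*m) + 1) :=
          mul_le_mul_of_nonneg_left hkub (by positivity)
        have h6 : 2*m*((z:ℝ)/(4*m) + 1) = (z:ℝ)/2 + 2*m := by
          field_simp
          ring
        rw [h6] at h5
        linarith
    set s : ℕ := z / k with hsdef
    have hks : k * s ≤ z := by
      rw [hsdef]
      exact Nat.mul_div_le z k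
    have hzlt : z < k * (s + 1) := by
      have h1 := Nat.div_add_mod z k
      have h2 := Nat.mod_lt z hkpos
      calc z = k * s + z % k := by rw [hsdef]; omega
        _ < k * s + k := by omega
        _ = k * (s + 1) := by ring
    have hslb : 2*m - 1 ≤ (s:ℝ) := by
      have h1 : (z:ℝ) < (k:ℝ) * ((s:ℝ) + 1) := by exact_mod_cast hzlt
      have h2 : (z:ℝ)/(k:ℝ) < (s:ℝ) + 1 := by
        rw [div_lt_iff₀ hkR]
        linarith [mul_comm ((s:ℝ)+1) (k:ℝ)]
      linarith
    have hs1 : 1 ≤ s := by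
      have : (1:ℝ) ≤ (s:ℝ) := by linarith
      exact_mod_cast this
    -- numeric hypothesis for core
    have hmq : m ^ q = (n:ℝ)^(q-1 : ℕ) := by
      rw [hmdef, ← Real.rpow_natCast ((n:ℝ)^(1 - 1/(q:ℝ))) q,
        ← Real.rpow_mul (by positivity), ← Real.rpow_natCast (n:ℝ) (q-1)]
      congr 1
      have hcast : ((q-1:ℕ):ℝ) = (q:ℝ) - 1 := by
        push_cast [Nat.cast_sub hq]
        ring
      rw [hcast]
      field_simp
    have hnum : (1:ℝ)/((2:ℝ)^q - 1) ≤ ((s:ℝ)/2)^q / (n:ℝ)^(q-1 : ℕ) := by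
      rw [← hmq]
      have hrw : ((s:ℝ)/2)^q / m^q = ((s:ℝ)/(2*m))^q := by
        rw [← div_pow, div_div]
      rw [hrw]
      have hc58 : (5:ℝ)/8 ≤ (s:ℝ)/(2*m) := by
        rw [le_div_iff₀ (by positivity)]
        linarith
      have hX4 : (4:ℝ) ≤ (2:ℝ)^q := by
        calc (4:ℝ) = 2^2 := by norm_num
          _ ≤ 2^q := pow_le_pow_right₀ one_le_two hq2
      have hY : (25:ℝ)/16 ≤ (2*((s:ℝ)/(2*m)))^q := by
        calc (25:ℝ)/16 = (5/4)^2 := by norm_num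
          _ ≤ (5/4)^q := pow_le_pow_right₀ (by norm_num) hq2
          _ ≤ (2*((s:ℝ)/(2*m)))^q := pow_le_pow_left₀ (by norm_num) (by linarith) q
      have hcq : (2*((s:ℝ)/(2*m)))^q = 2^q * ((s:ℝ)/(2*m))^q := mul_pow 2 _ q
      rw [hcq] at hY
      rw [div_le_iff₀ (by linarith : (0:ℝ) < (2:ℝ)^q - 1)]
      have hC0 : (0:ℝ) ≤ ((s:ℝ)/(2*m))^q := by positivity
      have hXpos : (0:ℝ) < (2:ℝ)^q := by positivity
      have step : (25:ℝ)/16 * ((2:ℝ)^q - 1) ≤ ((2:ℝ)^q * ((s:ℝ)/(2*m))^q) * ((2:ℝ)^q - 1) :=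
        mul_le_mul_of_nonneg_right hY (by linarith)
      have step2 : (2:ℝ)^q ≤ 25/16 * ((2:ℝ)^q - 1) := by linarith
      have step3 : (2:ℝ)^q * 1 ≤ (2:ℝ)^q * (((s:ℝ)/(2*m))^q * ((2:ℝ)^q - 1)) := by
        nlinarith [step, step2]
      have hfin2 := le_of_mul_le_mul_left step3 hXpos
      linarith
    -- index embedding
    have hlt : ∀ (t : Fin k) (r : Fin s), (t:ℕ)*s + (r:ℕ) < z := by
      intro t r
      have h1 : (t:ℕ)*s + (r:ℕ) < ((t:ℕ)+1)*s := by
        have := r.2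
        have h2 : ((t:ℕ)+1)*s = (t:ℕ)*s + s := by ring
        omega
      have h3 : ((t:ℕ)+1)*s ≤ k*s := Nat.mul_le_mul_right _ t.2
      omega
    have hidx : ∀ (t : Fin k) (j : Fin q) (r : Fin s),
        (j:ℕ)*z + ((t:ℕ)*s + (r:ℕ)) < q*z := by
      intro t j r
      have h2 := hlt t r
      have h4 : (j:ℕ)*z + ((t:ℕ)*s + (r:ℕ)) < (j:ℕ)*z + z := by omega
      have h5 : (j:ℕ)*z + z = ((j:ℕ)+1)*z := by ring
      have h6 : ((j:ℕ)+1)*z ≤ q*z := Nat.mul_le_mul_right _ j.2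
      omega
    set e : (Fin k × Fin q) × Fin s → Fin (q*z) :=
      fun v => ⟨(v.1.2:ℕ)*z + ((v.1.1:ℕ)*s + (v.2:ℕ)), hidx v.1.1 v.1.2 v.2⟩ with hedef
    have hinj : Function.Injective e := by
      rintro ⟨⟨t,j⟩,r⟩ ⟨⟨t',j'⟩,r'⟩ hv
      have hval : (j:ℕ)*z + ((t:ℕ)*s + (r:ℕ)) = (j':ℕ)*z + ((t':ℕ)*s + (r':ℕ)) := by
        have := congrArg Fin.val hv
        simpa [hedef] using this
      have ha : (t:ℕ)*s + (r:ℕ) < z := hlt t r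
      have ha' : (t':ℕ)*s + (r':ℕ) < z := hlt t' r'
      have hdd : ∀ (a b c : ℕ), c < z → (a * z + c) / z = a := by
        intro a b c hc
        rw [Nat.mul_comm a z, Nat.mul_add_div hz0, Nat.div_eq_of_lt hc]
        omega
      have hj : (j:ℕ) = (j':ℕ) := by
        have e1 := hdd (j:ℕ) 0 _ ha
        have e2 := hdd (j':ℕ) 0 _ ha'
        rw [← e1, ← e2, hval]
      have hrest : (t:ℕ)*s + (r:ℕ) = (t':ℕ)*s + (r':ℕ) := by
        have : (j:ℕ)*z = (j':ℕ)*z := by rw [hj]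
        omega
      have hs0 : 0 < s := hs1
      have hdd2 : ∀ (a c : ℕ), c < s → (a * s + c) / s = a ∧ (a * s + c) % s = c := by
        intro a c hc
        constructor
        · rw [Nat.mul_comm a s, Nat.mul_add_div hs0, Nat.div_eq_of_lt hc]; omega
        · rw [Nat.mul_comm a s, Nat.mul_add_mod, Nat.mod_eq_of_lt hc]
      have ht : (t:ℕ) = (t':ℕ) := by
        have e1 := (hdd2 (t:ℕ) (r:ℕ) r.2).1
        have e2 := (hdd2 (t':ℕ) (r':ℕ) r'.2).1
        rw [← e1, ← e2, hrest]
      have hr : (r:ℕ) = (r':ℕ) := by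
        have e1 := (hdd2 (t:ℕ) (r:ℕ) r.2).2
        have e2 := (hdd2 (t':ℕ) (r':ℕ) r'.2).2
        rw [← e1, ← e2, hrest]
      have htt : t = t' := Fin.ext ht
      have hjj : j = j' := Fin.ext hj
      have hrr : r = r' := Fin.ext hr
      subst htt; subst hjj; subst hrr; rfl
    -- measures
    set ν : Measure (Fin s → Fin n) := Measure.pi fun _ => μ with hνdef
    set κq : Measure (Fin q → Fin s → Fin n) := Measure.pi fun _ => ν with hκdef
    set Pi : Measure (Fin k → Fin q → Fin s → Fin n) := Measure.pi fun _ => κq with hPidef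
    haveI : IsProbabilityMeasure ν :=
      inferInstanceAs (IsProbabilityMeasure (Measure.pi (fun _ : Fin s => μ)))
    haveI : IsProbabilityMeasure κq :=
      inferInstanceAs (IsProbabilityMeasure (Measure.pi (fun _ : Fin q => ν)))
    haveI : IsProbabilityMeasure Pi :=
      inferInstanceAs (IsProbabilityMeasure (Measure.pi (fun _ : Fin k => κq)))
    have hcore : ((2:ℝ)^q)⁻¹ ≤
        (κq {g : Fin q → Fin s → Fin n | ∃ x : Fin n, ∀ j, ∃ r, g j r = x}).toReal := by
      rw [hκdef, hνdef]
      exact core n q s hq hs1 μ hnum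
    set SuccT : Set (Fin q → Fin s → Fin n) := {g | ∃ x : Fin n, ∀ j, ∃ r, g j r = x}
      with hSTdef
    set GoodF : Set (Fin k → Fin q → Fin s → Fin n) := {f | ∃ t, f t ∈ SuccT} with hGFdef
    have hfailbox : GoodFᶜ = Set.univ.pi (fun _ : Fin k => SuccTᶜ) := by
      ext f
      simp only [hGFdef, Set.mem_compl_iff, Set.mem_setOf_eq, not_exists, Set.mem_pi,
        Set.mem_univ, forall_true_left]
    have hPiGood : 1 - (1 - ((2:ℝ)^q)⁻¹)^k ≤ (Pi GoodF).toReal := by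
      have h1 : (Pi (GoodFᶜ)).toReal = ((κq (SuccTᶜ)).toReal)^k := by
        rw [hfailbox, hPidef, pi_const_box]
      have h2 := toReal_compl Pi (A := GoodF) MeasurableSet.of_discrete
      have h3 : (κq (SuccTᶜ)).toReal = 1 - (κq SuccT).toReal :=
        toReal_compl κq MeasurableSet.of_discrete
      have h4 : ((κq (SuccTᶜ)).toReal)^k ≤ (1 - ((2:ℝ)^q)⁻¹)^k := by
        apply pow_le_pow_left₀ ENNReal.toReal_nonneg
        rw [h3]
        linarith [hcore]
      linarith [h1, h2, h4]
    -- transfer to P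
    set R : (Fin (q*z) → Fin n) → ((Fin k × Fin q) × Fin s → Fin n) := fun ω => ω ∘ e
      with hRdef
    set c1 : ((Fin k × Fin q) × Fin s → Fin n) → (Fin k × Fin q → Fin s → Fin n) :=
      fun σ p r => σ (p, r) with hc1def
    set c2 : (Fin k × Fin q → Fin s → Fin n) → (Fin k → Fin q → Fin s → Fin n) :=
      fun τ t j => τ (t, j) with hc2def
    have hmapR : Measure.map R (Measure.pi fun _ => μ)
        = Measure.pi (fun _ : (Fin k × Fin q) × Fin s => μ) := map_pi_comp μ e hinj
    have hmapc1 : Measure.map c1 (Measure.pi (fun _ : (Fin k × Fin q) × Fin s => μ))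
        = Measure.pi (fun _ : Fin k × Fin q => ν) := by
      rw [hνdef]
      exact map_pi_curry μ
    have hmapc2 : Measure.map c2 (Measure.pi (fun _ : Fin k × Fin q => ν)) = Pi := by
      rw [hPidef, hκdef]
      exact map_pi_curry ν
    have hmR : Measurable R := Measurable.of_discrete
    have hmc1 : Measurable c1 := Measurable.of_discrete
    have hmc2 : Measurable c2 := Measurable.of_discrete
    have hsGF : MeasurableSet GoodF := MeasurableSet.of_discrete
    have hsc2 : MeasurableSet (c2 ⁻¹' GoodF) := MeasurableSet.of_discrete
    have hsc1 : MeasurableSet (c1 ⁻¹' (c2 ⁻¹' GoodF)) := MeasurableSet.of_discrete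
    have htrans : Pi GoodF = (Measure.pi fun _ : Fin (q*z) => μ)
        (R ⁻¹' (c1 ⁻¹' (c2 ⁻¹' GoodF))) := by
      calc Pi GoodF
          = Measure.map c2 (Measure.pi (fun _ : Fin k × Fin q => ν)) GoodF := by rw [hmapc2]
        _ = (Measure.pi (fun _ : Fin k × Fin q => ν)) (c2 ⁻¹' GoodF) :=
            Measure.map_apply hmc2 hsGF
        _ = Measure.map c1 (Measure.pi (fun _ : (Fin k × Fin q) × Fin s => μ)) (c2 ⁻¹' GoodF) := by
            rw [hmapc1]
        _ = (Measure.pi (fun _ : (Fin k × Fin q) × Fin s => μ)) (c1 ⁻¹' (c2 ⁻¹' GoodF)) :=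
            Measure.map_apply hmc1 hsc2
        _ = Measure.map R (Measure.pi fun _ => μ) (c1 ⁻¹' (c2 ⁻¹' GoodF)) := by rw [hmapR]
        _ = _ := Measure.map_apply hmR hsc1
    have hincl : R ⁻¹' (c1 ⁻¹' (c2 ⁻¹' GoodF)) ⊆ {ω : Fin (q*z) → Fin n |
        ∃ i : Fin q → Fin (q * z),
        (∀ j : Fin q, (j : ℕ) * z ≤ (i j : ℕ) ∧ (i j : ℕ) < ((j : ℕ) + 1) * z) ∧
        ∀ j j' : Fin q, ω (i j) = ω (i j')} := by
      intro ω hω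
      simp only [Set.mem_preimage, hGFdef, hSTdef, Set.mem_setOf_eq, hRdef, hc1def,
        hc2def] at hω
      obtain ⟨t, x, hx⟩ := hω
      choose r hr using hx
      refine ⟨fun j => e ((t, j), r j), fun j => ?_, fun j j' => ?_⟩
      · constructor
        · exact Nat.le_add_right _ _
        · have h2 := hlt t (r j)
          have h5 : ((j:ℕ)+1)*z = (j:ℕ)*z + z := by ring
          simp only [hedef]
          omega
      · exact (hr j).trans (hr j').symm
    have hmono : (Pi GoodF).toReal ≤ ((Measure.pi fun _ : Fin (q*z) => μ)
        {ω : Fin (q*z) → Fin n | ∃ i : Fin q → Fin (q * z),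
        (∀ j : Fin q, (j : ℕ) * z ≤ (i j : ℕ) ∧ (i j : ℕ) < ((j : ℕ) + 1) * z) ∧
        ∀ j j' : Fin q, ω (i j) = ω (i j')}).toReal := by
      rw [htrans]
      exact ENNReal.toReal_mono (measure_ne_top _ _) (measure_mono hincl)
    -- final chain
    have hq_inv : (2:ℝ)^(-(q:ℝ)) = ((2:ℝ)^q)⁻¹ := by
      rw [Real.rpow_neg (by norm_num), Real.rpow_natCast]
    have hbpos : (0:ℝ) < 1 - ((2:ℝ)^q)⁻¹ := by
      have h4 : (4:ℝ) ≤ 2^q := by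
        calc (4:ℝ) = 2^2 := by norm_num
          _ ≤ 2^q := pow_le_pow_right₀ one_le_two hq2
      have : ((2:ℝ)^q)⁻¹ ≤ 4⁻¹ := by
        apply inv_anti₀ (by norm_num) h4
      linarith
    have hble1 : 1 - ((2:ℝ)^q)⁻¹ ≤ 1 := by
      have : (0:ℝ) < ((2:ℝ)^q)⁻¹ := by positivity
      linarith
    have hkexp : (z:ℝ)/(4*m) ≤ (k:ℝ) := by
      rw [hkdef]
      exact Nat.le_ceil _
    have hrpow : (1 - ((2:ℝ)^q)⁻¹)^(k:ℕ) ≤ (1 - ((2:ℝ)^q)⁻¹)^((z:ℝ)/(4*m)) := by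
      rw [← Real.rpow_natCast (1 - ((2:ℝ)^q)⁻¹) k]
      exact Real.rpow_le_rpow_of_exponent_ge hbpos hble1 hkexp
    rw [hq_inv]
    have hfin : 1 - (1 - ((2:ℝ)^q)⁻¹)^((z:ℝ)/(4*m)) ≤ 1 - (1 - ((2:ℝ)^q)⁻¹)^(k:ℕ) := by
      linarith
    calc 1 - (1 - ((2:ℝ)^q)⁻¹)^((z:ℝ)/(4*m)) ≤ 1 - (1 - ((2:ℝ)^q)⁻¹)^(k:ℕ) := hfin
      _ ≤ (Pi GoodF).toReal := hPiGood
      _ ≤ _ := hmono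
end
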